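/- Let H = (A(n, 2, 0, −1))* ≅ kZ_n/J^2 with the Hopf structure given by Δ(e_i) = Σ_{j+l=i} e_j ⊗ e_l and Δ(a_i) = Σ_{j+l=i} (e_j ⊗ a_l + (−1)^l a_j ⊗ e_l). For each i, j, the k-linear map f_{i,j}: P_i ⊗ P_j → P_{i+j+1} ⊕ P_{i+j} defined on the basis by f_{i,j}(e_i ⊗ e_j) = e_{i+j}, f_{i,j}((1/2)(−1)^{j−1} e_i ⊗ a_j + (1/2) a_i ⊗ e_j) = e_{i+j+1}, f_{i,j}(e_i ⊗ a_j + (−1)^j a_i ⊗ e_j) = a_{i+j}, and f_{i,j}(a_i ⊗ a_j) = a_{i+j+1}, is an isomorphism of left H-modules. -/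

import Mathlib

/-!
STATEMENT 13: Let H = (A(n, 2, 0, −1))* ≅ kZ_n/J². For each i, j, the k-linear map
f_{i,j} : P_i ⊗ P_j → P_{i+j+1} ⊕ P_{i+j} defined on the basis by
f(e_i ⊗ e_j) = e_{i+j}, f((1/2)(−1)^{j−1} e_i ⊗ a_j + (1/2) a_i ⊗ e_j) = e_{i+j+1},
f(e_i ⊗ a_j + (−1)^j a_i ⊗ e_j) = a_{i+j}, f(a_i ⊗ a_j) = a_{i+j+1},
is an isomorphism of left H-modules (for the diagonal action of H on the tensor product).
-/

open CategoryTheory Limits TensorProduct MonoidalCategory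

/-- Right multiplication by `c`, as an endomorphism of the left regular module. -/
def rmul {H : Type} [Ring H] (c : H) : H →ₗ[H] H where
  toFun x := x * c
  map_add' x y := add_mul x y c
  map_smul' h x := mul_assoc h x c

/-- The data exhibiting a Hopf algebra `H` as `(A(n, 2, μ, -1))^*` (of nilpotent type)
`≅ kZ_n/J²`: a basis `e_i, a_i` (`i ∈ ℤ/n`) of `H` with the multiplication of the quotient
of the path algebra of the basic cycle `Z_n` by paths of length two (`e_i` the vertex
idempotents, `a_i : e_i → e_{i+1}` the arrows), and with the comultiplication and counit
determined by `Δ(e_i) = ∑_{j+l=i} e_j ⊗ e_l`,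
`Δ(a_i) = ∑_{j+l=i} (e_j ⊗ a_l + (-1)^l a_j ⊗ e_l)`, `ε(e_i) = δ_{i,0}`, `ε(a_i) = 0`. -/
structure CycleHopf (K : Type) [Field K] (n : ℕ) [NeZero n]
    (H : Type) [Ring H] [HopfAlgebra K H] where
  e : ZMod n → H
  a : ZMod n → H
  orth : ∀ i j, e i * e j = if i = j then e i else 0
  sum_e : ∑ i, e i = 1
  ae : ∀ i, a i * e i = a i
  ea : ∀ i, e (i + 1) * a i = a i
  ae' : ∀ i j, j ≠ i → a i * e j = 0
  ea' : ∀ i j, j ≠ i + 1 → e j * a i = 0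
  aa : ∀ i j, a i * a j = 0
  indep : LinearIndependent K (Sum.elim e a)
  span : Submodule.span K (Set.range (Sum.elim e a)) = ⊤
  comul_e : ∀ i, Coalgebra.comul (R := K) (e i) = ∑ j, e j ⊗ₜ[K] e (i - j)
  comul_a : ∀ i, Coalgebra.comul (R := K) (a i) =
    ∑ j, (e j ⊗ₜ[K] a (i - j) + ((-1 : K) ^ ((i - j).val)) • (a j ⊗ₜ[K] e (i - j)))
  counit_e : ∀ i, Coalgebra.counit (R := K) (e i) = if i = 0 then 1 else 0
  counit_a : ∀ i, Coalgebra.counit (R := K) (a i) = 0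

namespace CycleHopf

variable {K : Type} [Field K] {n : ℕ} [NeZero n] {H : Type} [Ring H] [HopfAlgebra K H]
variable (D : CycleHopf K n H)

/-- The indecomposable projective `P_i = He_i`. -/
def P (i : ZMod n) : Submodule H H := Submodule.span H {D.e i}

lemma mul_e_mem (i : ZMod n) (x : H) : x * D.e i ∈ D.P i := by
  apply Submodule.mem_span_singleton.2
  exact ⟨x, rfl⟩

lemma e_mem (i : ZMod n) : D.e i ∈ D.P i := by
  have := D.mul_e_mem i (D.e i)
  rwa [D.orth i i, if_pos rfl] at this

lemma a_mem (i : ZMod n) : D.a i ∈ D.P i := by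
  have := D.mul_e_mem i (D.a i)
  rwa [D.ae i] at this

lemma mul_a_mem (i : ZMod n) (x : H) : x * D.a i ∈ D.P i := by
  have h : x * D.a i = (x * D.a i) * D.e i := by rw [mul_assoc, D.ae i]
  rw [h]; exact D.mul_e_mem i _

/-- The simple module `S_i = P_i / (im a_i) = P_i / span{a_i}`. -/
def S (i : ZMod n) : Type :=
  ↥(D.P i) ⧸ (Submodule.span H {(⟨D.a i, D.a_mem i⟩ : ↥(D.P i))})

noncomputable instance (i : ZMod n) : AddCommGroup (D.S i) := by
  unfold S; infer_instance
noncomputable instance (i : ZMod n) : Module H (D.S i) := by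
  unfold S; infer_instance

end CycleHopf

section Diag
variable (K : Type) [CommRing K] (H : Type) [Ring H] [Bialgebra K H]
variable (M N : Type) [AddCommGroup M] [Module K M] [Module H M] [IsScalarTower K H M]
  [AddCommGroup N] [Module K N] [Module H N] [IsScalarTower K H N]

noncomputable def actB : H →ₗ[K] Module.End K M where
  toFun h :=
    { toFun := fun m => h • m
      map_add' := fun x y => smul_add h x y
      map_smul' := fun c x => (smul_comm c h x).symm }
  map_add' h h' := by ext m; exact add_smul h h' m
  map_smul' c h := by ext m; exact smul_assoc c h m

noncomputable def act2 : (H ⊗[K] H) →ₗ[K] Module.End K (M ⊗[K] N) :=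
  (TensorProduct.homTensorHomMap (RingHom.id K) M N M N).comp
    (TensorProduct.map (actB K H M) (actB K H N))

noncomputable def diagSmul (h : H) (z : M ⊗[K] N) : M ⊗[K] N :=
  act2 K H M N (Coalgebra.comul (R := K) h) z

end Diag


namespace CycleHopf
variable {K : Type} [Field K] {n : ℕ} [NeZero n] {H : Type} [Ring H] [HopfAlgebra K H]
variable (D : CycleHopf K n H)

/-- `e_i` as an element of `P_i`. -/
def eP (i : ZMod n) : ↥(D.P i) := ⟨D.e i, D.e_mem i⟩

/-- `a_i` as an element of `P_i`. -/
def aP (i : ZMod n) : ↥(D.P i) := ⟨D.a i, D.a_mem i⟩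

end CycleHopf

/-! Both sides are `4`-dimensional and the four prescribed values span the target, so `f` is a
linear bijection. For `H`-linearity it is enough to test the generators `e_m`, `a_m` of `H` on
the basis tensors. Each basis vector `x` of a `P_i` is homogeneous, `e_p x = x` for a single
vertex `p`; on `x ⊗ y` with `x, y` of degrees `p, q`, `Δ(e_m)` then acts as the projection onto
degree `p + q` and `Δ(a_m)` as `x ⊗ a_{m-p} y + (-1)^q a_{m-q} x ⊗ y`. What is left is a sign
check, which needs `(-1)^(j+1) = -(-1)^j` for `j ∈ ℤ/n`, i.e. `n` even. -/

section DiagonalAction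
variable {K : Type} [CommRing K] {H : Type} [Ring H] [Bialgebra K H]
  {M N Q : Type} [AddCommGroup M] [Module K M] [Module H M] [IsScalarTower K H M]
  [AddCommGroup N] [Module K N] [Module H N] [IsScalarTower K H N]
  [AddCommGroup Q] [Module K Q] [Module H Q] [IsScalarTower K H Q]

lemma act2_tmul (u v : H) (x : M) (y : N) :
    act2 K H M N (u ⊗ₜ[K] v) (x ⊗ₜ[K] y) = (u • x) ⊗ₜ[K] (v • y) := by
  simp [act2, actB]

lemma map_act2_comul_eq_smul_of_span {f : M ⊗[K] N →ₗ[K] Q} {s : Set H} {sM : Set M}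
    {sN : Set N} (hs : Submodule.span K s = ⊤) (hM : Submodule.span K sM = ⊤)
    (hN : Submodule.span K sN = ⊤)
    (hf : ∀ h ∈ s, ∀ x ∈ sM, ∀ y ∈ sN,
      f (act2 K H M N (Coalgebra.comul h) (x ⊗ₜ y)) = h • f (x ⊗ₜ y))
    (h : H) (z : M ⊗[K] N) :
    f (act2 K H M N (Coalgebra.comul h) z) = h • f z := by
  have key : (LinearMap.llcomp K _ _ _ f) ∘ₗ act2 K H M N ∘ₗ Coalgebra.comul =
      (LinearMap.lcomp K Q f) ∘ₗ actB K H Q := by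
    refine LinearMap.ext_on hs fun h hh => TensorProduct.ext ?_
    exact LinearMap.ext_on hM fun x hx => LinearMap.ext_on hN fun y hy => hf h hh x hx y hy
  exact LinearMap.congr_fun (LinearMap.congr_fun key h) z

end DiagonalAction

lemma neg_one_pow_mul_self {R : Type} [Monoid R] [HasDistribNeg R] (k : ℕ) :
    (-1 : R) ^ k * (-1) ^ k = 1 := by
  rw [← pow_add, ← two_mul, pow_mul, neg_one_sq, one_pow]

lemma ZMod.neg_one_pow_val_add_one {R : Type} [Ring R] {n : ℕ} [NeZero n] (hn : Even n)
    (j : ZMod n) : (-1 : R) ^ (j + 1).val = -(-1) ^ j.val := by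
  have : Fact (1 < n) := ⟨by obtain ⟨m, rfl⟩ := hn; have := NeZero.ne (m + m); omega⟩
  rw [neg_one_pow_eq_pow_mod_two, ZMod.val_add, ZMod.val_one,
    Nat.mod_mod_of_dvd _ (even_iff_two_dvd.1 hn), ← neg_one_pow_eq_pow_mod_two, pow_succ,
    mul_neg_one]

namespace CycleHopf
variable {K : Type} [Field K] {n : ℕ} [NeZero n] {H : Type} [Ring H] [HopfAlgebra K H]
  (D : CycleHopf K n H)

lemma e_smul_eq_ite {M : Type} [AddCommGroup M] [Module H M] {p : ZMod n} {x : M}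
    (hx : D.e p • x = x) (s : ZMod n) : D.e s • x = if s = p then x else 0 := by
  rw [← hx, smul_smul, D.orth]
  split_ifs with h
  · rw [h, hx]
  · exact zero_smul H x

lemma e_smul_eP (i : ZMod n) : D.e i • D.eP i = D.eP i :=
  Subtype.ext <| (D.orth i i).trans (if_pos rfl)

lemma e_smul_aP (i : ZMod n) : D.e (i + 1) • D.aP i = D.aP i :=
  Subtype.ext (D.ea i)

lemma a_smul_eP (s i : ZMod n) : D.a s • D.eP i = if s = i then D.aP i else 0 := by
  split_ifs with h
  · subst h; exact Subtype.ext (D.ae s)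
  · exact Subtype.ext (D.ae' s i (Ne.symm h))

lemma a_smul_aP (s i : ZMod n) : D.a s • D.aP i = 0 :=
  Subtype.ext (D.aa s i)

lemma span_eP_aP (i : ZMod n) : Submodule.span K {D.eP i, D.aP i} = ⊤ := by
  let φ : H →ₗ[K] D.P i := (LinearMap.toSpanSingleton H (D.P i) (D.eP i)).restrictScalars K
  have hφ : LinearMap.range φ = ⊤ := by
    refine LinearMap.range_eq_top.2 fun x => ?_
    obtain ⟨h, hh⟩ := Submodule.mem_span_singleton.1 x.2
    exact ⟨h, Subtype.ext hh⟩
  have hgen : φ '' Set.range (Sum.elim D.e D.a) ⊆ Submodule.span K {D.eP i, D.aP i} := by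
    rintro _ ⟨_, ⟨s | s, rfl⟩, rfl⟩
    · show D.e s • D.eP i ∈ _
      rw [D.e_smul_eq_ite (D.e_smul_eP i)]
      split_ifs
      exacts [Submodule.subset_span (by simp), zero_mem _]
    · show D.a s • D.eP i ∈ _
      rw [D.a_smul_eP]
      split_ifs
      exacts [Submodule.subset_span (by simp), zero_mem _]
  rw [eq_top_iff, ← hφ, LinearMap.range_eq_map, ← D.span, Submodule.map_span]
  exact Submodule.span_le.2 hgen

lemma linearIndependent_eP_aP (i : ZMod n) : LinearIndependent K ![D.eP i, D.aP i] := by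
  have hinj : Function.Injective ![(Sum.inl i : ZMod n ⊕ ZMod n), Sum.inr i] := by
    intro s t hst; fin_cases s <;> fin_cases t <;> simp_all
  refine LinearIndependent.of_comp ((D.P i).subtype.restrictScalars K) ?_
  convert D.indep.comp _ hinj using 1
  funext t; fin_cases t <;> rfl

lemma finrank_P (i : ZMod n) : Module.finrank K (D.P i) = 2 := by
  have hspan : ⊤ ≤ Submodule.span K (Set.range ![D.eP i, D.aP i]) := by
    rw [Matrix.range_cons_cons_empty, D.span_eP_aP]
  rw [Module.finrank_eq_card_basis (Module.Basis.mk (D.linearIndependent_eP_aP i) hspan),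
    Fintype.card_fin]

section Tensor
variable {M N : Type} [AddCommGroup M] [Module K M] [Module H M] [IsScalarTower K H M]
  [AddCommGroup N] [Module K N] [Module H N] [IsScalarTower K H N]

lemma act2_comul_e_tmul {p q : ZMod n} {x : M} {y : N} (hx : D.e p • x = x)
    (hy : D.e q • y = y) (m : ZMod n) :
    act2 K H M N (Coalgebra.comul (D.e m)) (x ⊗ₜ y) = if m = p + q then x ⊗ₜ y else 0 := by
  rw [D.comul_e, map_sum, LinearMap.sum_apply,
    Finset.sum_eq_single_of_mem p (Finset.mem_univ p)]
  · simp only [act2_tmul, hx, D.e_smul_eq_ite hy, sub_eq_iff_eq_add', TensorProduct.tmul_ite]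
  · intro s _ hs
    rw [act2_tmul, D.e_smul_eq_ite hx, if_neg hs, TensorProduct.zero_tmul]

lemma act2_comul_a_tmul {p q : ZMod n} {x : M} {y : N} (hx : D.e p • x = x)
    (hy : D.e q • y = y) (m : ZMod n) :
    act2 K H M N (Coalgebra.comul (D.a m)) (x ⊗ₜ y) =
      x ⊗ₜ (D.a (m - p) • y) + ((-1 : K) ^ q.val) • ((D.a (m - q) • x) ⊗ₜ y) := by
  simp only [D.comul_a, map_sum, map_add, map_smul, LinearMap.sum_apply, LinearMap.add_apply,
    LinearMap.smul_apply, act2_tmul, Finset.sum_add_distrib]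
  congr 1
  · rw [Finset.sum_eq_single_of_mem p (Finset.mem_univ p), hx]
    intro s _ hs
    rw [D.e_smul_eq_ite hx, if_neg hs, TensorProduct.zero_tmul]
  · rw [Finset.sum_eq_single_of_mem (m - q) (Finset.mem_univ _), sub_sub_cancel, hy]
    intro s _ hs
    rw [D.e_smul_eq_ite hy, if_neg (fun h => hs (by rw [← h, sub_sub_cancel])),
      TensorProduct.tmul_zero, smul_zero]

lemma map_act2_comul_e_tmul {Q : Type} [AddCommGroup Q] [Module K Q] [Module H Q]
    {f : M ⊗[K] N →ₗ[K] Q} {p q : ZMod n} {x : M} {y : N}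
    (hx : D.e p • x = x) (hy : D.e q • y = y) (hf : D.e (p + q) • f (x ⊗ₜ y) = f (x ⊗ₜ y))
    (m : ZMod n) :
    f (act2 K H M N (Coalgebra.comul (D.e m)) (x ⊗ₜ y)) = D.e m • f (x ⊗ₜ y) := by
  rw [D.act2_comul_e_tmul hx hy, D.e_smul_eq_ite hf, apply_ite f, map_zero]

end Tensor

variable {D} {i j : ZMod n}

/-- The values prescribing the paper's `f_{i,j}`. -/
structure IsDecompMap (f : D.P i ⊗[K] D.P j →ₗ[K] D.P (i + j + 1) × D.P (i + j)) : Prop where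
  eP_eP : f (D.eP i ⊗ₜ D.eP j) = (0, D.eP (i + j))
  combo_e : f ((2⁻¹ * (-1 : K) ^ (j.val + 1)) • (D.eP i ⊗ₜ D.aP j) +
    (2⁻¹ : K) • (D.aP i ⊗ₜ D.eP j)) = (D.eP (i + j + 1), 0)
  combo_a : f (D.eP i ⊗ₜ D.aP j + ((-1 : K) ^ j.val) • (D.aP i ⊗ₜ D.eP j)) = (0, D.aP (i + j))
  aP_aP : f (D.aP i ⊗ₜ D.aP j) = (D.aP (i + j + 1), 0)

namespace IsDecompMap
variable {f : D.P i ⊗[K] D.P j →ₗ[K] D.P (i + j + 1) × D.P (i + j)}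

lemma map_eP_aP (hf : IsDecompMap f) (h2 : (2 : K) ≠ 0) :
    f (D.eP i ⊗ₜ D.aP j) = (-(-1 : K) ^ j.val • D.eP (i + j + 1), (2⁻¹ : K) • D.aP (i + j)) := by
  have hε := neg_one_pow_mul_self (R := K) j.val
  have h2' : (2 : K)⁻¹ * 2 = 1 := inv_mul_cancel₀ h2
  calc f (D.eP i ⊗ₜ D.aP j)
      = (2⁻¹ : K) • f (D.eP i ⊗ₜ D.aP j + ((-1 : K) ^ j.val) • (D.aP i ⊗ₜ D.eP j)) -
        (-1 : K) ^ j.val • f ((2⁻¹ * (-1 : K) ^ (j.val + 1)) • (D.eP i ⊗ₜ D.aP j) +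
          (2⁻¹ : K) • (D.aP i ⊗ₜ D.eP j)) := by
        simp only [map_add, map_smul]
        match_scalars
        · linear_combination (-2⁻¹ : K) * hε - h2'
        · ring
    _ = _ := by
        rw [hf.combo_a, hf.combo_e]
        ext <;> simp

lemma map_aP_eP (hf : IsDecompMap f) (h2 : (2 : K) ≠ 0) :
    f (D.aP i ⊗ₜ D.eP j) = (D.eP (i + j + 1), ((-1 : K) ^ j.val * 2⁻¹) • D.aP (i + j)) := by
  have hε := neg_one_pow_mul_self (R := K) j.val
  have h2' : (2 : K)⁻¹ * 2 = 1 := inv_mul_cancel₀ h2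
  calc f (D.aP i ⊗ₜ D.eP j)
      = f ((2⁻¹ * (-1 : K) ^ (j.val + 1)) • (D.eP i ⊗ₜ D.aP j) +
          (2⁻¹ : K) • (D.aP i ⊗ₜ D.eP j)) + ((-1 : K) ^ j.val * 2⁻¹) •
        f (D.eP i ⊗ₜ D.aP j + ((-1 : K) ^ j.val) • (D.aP i ⊗ₜ D.eP j)) := by
        simp only [map_add, map_smul]
        match_scalars
        · linear_combination (-2⁻¹ : K) * hε - h2'
        · ring
    _ = _ := by
        rw [hf.combo_a, hf.combo_e]
        ext <;> simp

lemma map_act2_comul_e (hf : IsDecompMap f) (h2 : (2 : K) ≠ 0) (m : ZMod n)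
    {x : D.P i} (hx : x ∈ ({D.eP i, D.aP i} : Set (D.P i)))
    {y : D.P j} (hy : y ∈ ({D.eP j, D.aP j} : Set (D.P j))) :
    f (act2 K H _ _ (Coalgebra.comul (D.e m)) (x ⊗ₜ y)) = D.e m • f (x ⊗ₜ y) := by
  rcases hx with rfl | rfl <;> rcases hy with rfl | rfl
  · refine D.map_act2_comul_e_tmul (D.e_smul_eP i) (D.e_smul_eP j) ?_ m
    simp [hf.eP_eP, D.e_smul_eP]
  · refine D.map_act2_comul_e_tmul (D.e_smul_eP i) (D.e_smul_aP j) ?_ m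
    simp [hf.map_eP_aP h2, ← add_assoc, D.e_smul_eP, D.e_smul_aP, smul_comm (M := H) (N := K)]
  · refine D.map_act2_comul_e_tmul (D.e_smul_aP i) (D.e_smul_eP j) ?_ m
    simp [hf.map_aP_eP h2, add_right_comm i 1 j, D.e_smul_eP, D.e_smul_aP,
      smul_comm (M := H) (N := K)]
  · refine D.map_act2_comul_e_tmul (D.e_smul_aP i) (D.e_smul_aP j) ?_ m
    rw [show i + 1 + (j + 1) = i + j + 1 + 1 by ring]
    simp [hf.aP_aP, D.e_smul_aP]

lemma map_act2_comul_a (hf : IsDecompMap f) (h2 : (2 : K) ≠ 0) (hn : Even n) (m : ZMod n)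
    {x : D.P i} (hx : x ∈ ({D.eP i, D.aP i} : Set (D.P i)))
    {y : D.P j} (hy : y ∈ ({D.eP j, D.aP j} : Set (D.P j))) :
    f (act2 K H _ _ (Coalgebra.comul (D.a m)) (x ⊗ₜ y)) = D.a m • f (x ⊗ₜ y) := by
  rcases hx with rfl | rfl <;> rcases hy with rfl | rfl
  · rw [D.act2_comul_a_tmul (D.e_smul_eP i) (D.e_smul_eP j), hf.eP_eP]
    by_cases hm : m = i + j
    · simp [hm, D.a_smul_eP, hf.combo_a]
    · simp [hm, D.a_smul_eP, sub_eq_iff_eq_add, add_comm j i, Prod.ext_iff]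
  · rw [D.act2_comul_a_tmul (D.e_smul_eP i) (D.e_smul_aP j), hf.map_eP_aP h2]
    by_cases hm : m = i + j + 1 <;>
      simp [hm, D.a_smul_eP, D.a_smul_aP, sub_eq_iff_eq_add, ← add_assoc, hf.aP_aP,
        smul_comm (M := H) (N := K), ZMod.neg_one_pow_val_add_one hn, Prod.ext_iff]
  · rw [D.act2_comul_a_tmul (D.e_smul_aP i) (D.e_smul_eP j), hf.map_aP_eP h2]
    by_cases hm : m = i + j + 1 <;>
      simp [hm, D.a_smul_eP, D.a_smul_aP, sub_eq_iff_eq_add', add_right_comm i 1 j, hf.aP_aP,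
        smul_comm (M := H) (N := K), Prod.ext_iff]
  · rw [D.act2_comul_a_tmul (D.e_smul_aP i) (D.e_smul_aP j), hf.aP_aP]
    simp [D.a_smul_aP, Prod.ext_iff]

lemma map_act2_comul (hf : IsDecompMap f) (h2 : (2 : K) ≠ 0) (hn : Even n) (h : H)
    (z : D.P i ⊗[K] D.P j) : f (act2 K H _ _ (Coalgebra.comul h) z) = h • f z := by
  refine map_act2_comul_eq_smul_of_span D.span (D.span_eP_aP i) (D.span_eP_aP j) ?_ h z
  rintro _ ⟨s | s, rfl⟩ x hx y hy
  exacts [hf.map_act2_comul_e h2 s hx hy, hf.map_act2_comul_a h2 hn s hx hy]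

lemma surjective (hf : IsDecompMap f) : Function.Surjective f := by
  have hinl : Submodule.span K {D.eP (i + j + 1), D.aP (i + j + 1)} ≤
      (LinearMap.range f).comap (LinearMap.inl K (D.P (i + j + 1)) (D.P (i + j))) :=
    Submodule.span_le.2 (by rintro _ (rfl | rfl); exacts [⟨_, hf.combo_e⟩, ⟨_, hf.aP_aP⟩])
  have hinr : Submodule.span K {D.eP (i + j), D.aP (i + j)} ≤
      (LinearMap.range f).comap (LinearMap.inr K (D.P (i + j + 1)) (D.P (i + j))) :=
    Submodule.span_le.2 (by rintro _ (rfl | rfl); exacts [⟨_, hf.eP_eP⟩, ⟨_, hf.combo_a⟩])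
  rw [D.span_eP_aP] at hinl hinr
  rintro ⟨x, y⟩
  obtain ⟨u, hu⟩ : (x, 0) ∈ LinearMap.range f := hinl Submodule.mem_top
  obtain ⟨v, hv⟩ : (0, y) ∈ LinearMap.range f := hinr Submodule.mem_top
  exact ⟨u + v, by rw [map_add, hu, hv, Prod.mk_add_mk, add_zero, zero_add]⟩

lemma bijective (hf : IsDecompMap f) : Function.Bijective f := by
  have (k : ZMod n) : Module.Finite K (D.P k) :=
    Module.finite_of_finrank_pos (by rw [D.finrank_P]; norm_num)
  have hrank : Module.finrank K (D.P i ⊗[K] D.P j) =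
      Module.finrank K (D.P (i + j + 1) × D.P (i + j)) := by
    rw [Module.finrank_tensorProduct, Module.finrank_prod, D.finrank_P, D.finrank_P, D.finrank_P,
      D.finrank_P]
  exact ⟨(LinearMap.injective_iff_surjective_of_finrank_eq_finrank hrank).2 hf.surjective,
    hf.surjective⟩

end IsDecompMap
end CycleHopf

theorem f_ij_is_H_module_iso_general
    (K : Type) [Field K] [CharZero K]
    (n : ℕ) [NeZero n] (hn : Even n)
    (H : Type) [Ring H] [HopfAlgebra K H]
    (D : CycleHopf K n H) (i j : ZMod n) :
    ∀ f : (↥(D.P i) ⊗[K] ↥(D.P j)) →ₗ[K] (↥(D.P (i + j + 1)) × ↥(D.P (i + j))),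
      f (D.eP i ⊗ₜ[K] D.eP j) = (0, D.eP (i + j)) →
      f ((2⁻¹ * (-1 : K) ^ (j.val + 1)) • (D.eP i ⊗ₜ[K] D.aP j) +
          (2⁻¹ : K) • (D.aP i ⊗ₜ[K] D.eP j)) = (D.eP (i + j + 1), 0) →
      f (D.eP i ⊗ₜ[K] D.aP j + ((-1 : K) ^ j.val) • (D.aP i ⊗ₜ[K] D.eP j)) =
        (0, D.aP (i + j)) →
      f (D.aP i ⊗ₜ[K] D.aP j) = (D.aP (i + j + 1), 0) →
      (∀ (h : H) (z : ↥(D.P i) ⊗[K] ↥(D.P j)),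
          f (act2 K H ↥(D.P i) ↥(D.P j) (Coalgebra.comul (R := K) h) z) = h • f z) ∧
      Function.Bijective f := by
  intro f hEE hCe hCa hAA
  have hf : CycleHopf.IsDecompMap f := ⟨hEE, hCe, hCa, hAA⟩
  exact ⟨hf.map_act2_comul two_ne_zero hn, hf.bijective⟩

/-- **Theorem.** The `K`-linear map `f_{i,j} : P_i ⊗[K] P_j → P_{i+j+1} ⊕ P_{i+j}`
determined on the basis by `f(e_i ⊗ e_j) = e_{i+j}`,
`f((1/2)(−1)^{j−1} e_i ⊗ a_j + (1/2) a_i ⊗ e_j) = e_{i+j+1}`,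
`f(e_i ⊗ a_j + (−1)^j a_i ⊗ e_j) = a_{i+j}` and `f(a_i ⊗ a_j) = a_{i+j+1}` is an
isomorphism of left `H`-modules, where `H` acts diagonally (via `Δ`) on the source. -/
theorem f_ij_is_H_module_iso
    (K : Type) [Field K] [IsAlgClosed K] [CharZero K]
    (n : ℕ) [NeZero n] (hn : Even n)
    (H : Type) [Ring H] [HopfAlgebra K H] [FiniteDimensional K H]
    (D : CycleHopf K n H) (i j : ZMod n) :
    ∀ f : (↥(D.P i) ⊗[K] ↥(D.P j)) →ₗ[K] (↥(D.P (i + j + 1)) × ↥(D.P (i + j))),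
      f (D.eP i ⊗ₜ[K] D.eP j) = (0, D.eP (i + j)) →
      f ((2⁻¹ * (-1 : K) ^ (j.val + 1)) • (D.eP i ⊗ₜ[K] D.aP j) +
          (2⁻¹ : K) • (D.aP i ⊗ₜ[K] D.eP j)) = (D.eP (i + j + 1), 0) →
      f (D.eP i ⊗ₜ[K] D.aP j + ((-1 : K) ^ j.val) • (D.aP i ⊗ₜ[K] D.eP j)) =
        (0, D.aP (i + j)) →
      f (D.aP i ⊗ₜ[K] D.aP j) = (D.aP (i + j + 1), 0) →
      (∀ (h : H) (z : ↥(D.P i) ⊗[K] ↥(D.P j)),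
          f (act2 K H ↥(D.P i) ↥(D.P j) (Coalgebra.comul (R := K) h) z) = h • f z) ∧
      Function.Bijective f :=
  f_ij_is_H_module_iso_general K n hn H D i j
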